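/- For all x > 0, Γ(x)/(x^x e^{−x} √(2π)) < exp(−(1/2)·ψ(δ(x))), where δ(x) = (1/2)·1/((x+1)·log(1 + 1/x) − 1). -/

import Mathlib

open Real

noncomputable def psi (x : ℝ) : ℝ := deriv Real.Gamma x / Real.Gamma x

noncomputable def δ (x : ℝ) : ℝ := (1/2) * (1 / ((x + 1) * Real.log (1 + 1/x) - 1))

/-!
Under the probability density `2 (x + 1 - t)` on `[x, x + 1]` the mean of `1 / t` is `1 / δ(x)`,
while integration by parts and Raabe's formula
`∫_x^{x+1} log Γ = x log x - x + log (2π) / 2` give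
`∫ 2 (x + 1 - t) ψ(t) dt = 2 (x log x - x + log (2π) / 2 - log Γ(x))`.
Since `s ↦ ψ(1 / s)` is strictly convex, the strict Jensen inequality yields
`ψ(δ(x)) < 2 (x log x - x + log (2π) / 2 - log Γ(x))`, which is the claim after exponentiating.

The convexity of `ψ(1 / s)` comes from `ψ(x) = lim (log N - ∑_{n<N} (x + n)⁻¹)`, each term
`-(1 / s + n)⁻¹ = -s / (1 + n s)` being convex in `s`, strictly so for `n ≥ 1`.
Raabe's formula holds because `∫_x^{x+1} log Γ - (x log x - x)` does not depend on `x`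
(as `log Γ(t + 1) - log Γ(t) = log t`), and its value is read off at large integers `n` from
Stirling's formula, the convexity of `log Γ` squeezing `∫_n^{n+1} log Γ`
between `log Γ(n) + log (n - 1) / 2` and `log Γ(n) + log n / 2`.
-/

open Filter Set MeasureTheory Topology
open scoped Nat

lemma ConvexOn.sum {E ι : Type*} [AddCommMonoid E] [Module ℝ E] {S : Set E} (t : Finset ι)
    {f : ι → E → ℝ} (hS : Convex ℝ S) (hf : ∀ i ∈ t, ConvexOn ℝ S (f i)) :
    ConvexOn ℝ S fun x => ∑ i ∈ t, f i x := by
  refine ⟨hS, fun x hx y hy a b ha hb hab => ?_⟩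
  simp only [smul_eq_mul, Finset.mul_sum, ← Finset.sum_add_distrib]
  exact Finset.sum_le_sum fun i hi => (hf i hi).2 hx hy ha hb hab

lemma ConvexOn.of_tendsto {E ι : Type*} [AddCommMonoid E] [Module ℝ E] {S : Set E}
    {l : Filter ι} [l.NeBot] {f : ι → E → ℝ} {g : E → ℝ} (hS : Convex ℝ S)
    (hf : ∀ i, ConvexOn ℝ S (f i)) (hlim : ∀ x ∈ S, Tendsto (fun i => f i x) l (𝓝 (g x))) :
    ConvexOn ℝ S g := by
  refine ⟨hS, fun x hx y hy a b ha hb hab => ?_⟩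
  exact le_of_tendsto_of_tendsto' (hlim _ (hS hx hy ha hb hab))
    (((hlim x hx).const_mul a).add ((hlim y hy).const_mul b)) fun i => (hf i).2 hx hy ha hb hab

lemma StrictConvexOn.map_integral_lt {α : Type*} [MeasurableSpace α] {μ : Measure α}
    [IsProbabilityMeasure μ] {s : Set ℝ} {f : ℝ → ℝ} {u : α → ℝ} (hf : StrictConvexOn ℝ s f)
    (hfc : ContinuousOn f s) (hs : IsClosed s) (hus : ∀ᵐ a ∂μ, u a ∈ s) (hu : Integrable u μ)
    (hfu : Integrable (f ∘ u) μ) (hatom : ∀ c, μ (u ⁻¹' {c}) = 0) :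
    f (∫ a, u a ∂μ) < ∫ a, f (u a) ∂μ := by
  rcases hf.ae_eq_const_or_map_average_lt hfc hs hus hu hfu with hconst | hlt
  · have hne : ∀ᵐ a ∂μ, u a ≠ ⨍ a, u a ∂μ := measure_eq_zero_iff_ae_notMem.1 (hatom _)
    obtain ⟨a, ha, ha'⟩ := (hconst.and hne).exists
    exact absurd ha ha'
  · simpa only [average_eq_integral] using hlt

lemma StrictConvexOn.map_intervalIntegral_lt {a b : ℝ} (hab : a ≤ b) {w u f : ℝ → ℝ}
    {s : Set ℝ} (hf : StrictConvexOn ℝ s f) (hfc : ContinuousOn f s) (hs : IsClosed s)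
    (hw : Measurable w) (hw0 : ∀ t ∈ Ioc a b, 0 ≤ w t) (hw1 : ∫ t in a..b, w t = 1)
    (hu : Function.Injective u) (hus : ∀ t ∈ Ioc a b, u t ∈ s)
    (hwu : IntervalIntegrable (fun t => w t * u t) volume a b)
    (hwfu : IntervalIntegrable (fun t => w t * f (u t)) volume a b) :
    f (∫ t in a..b, w t * u t) < ∫ t in a..b, w t * f (u t) := by
  set ν := (volume.restrict (Ioc a b)).withDensity fun t => ENNReal.ofReal (w t)
  have hdens : Measurable fun t => ENNReal.ofReal (w t) := hw.ennreal_ofReal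
  have hfin : ∀ᵐ t ∂volume.restrict (Ioc a b), ENNReal.ofReal (w t) < ⊤ :=
    ae_of_all _ fun _ => ENNReal.ofReal_lt_top
  have hsmul (v : ℝ → ℝ) : (fun t => (ENNReal.ofReal (w t)).toReal • v t)
      =ᵐ[volume.restrict (Ioc a b)] fun t => w t * v t := by
    filter_upwards [ae_restrict_mem measurableSet_Ioc] with t ht
    rw [ENNReal.toReal_ofReal (hw0 t ht), smul_eq_mul]
  have hintegral (v : ℝ → ℝ) : ∫ t, v t ∂ν = ∫ t in a..b, w t * v t := by
    rw [integral_withDensity_eq_integral_toReal_smul hdens hfin, integral_congr_ae (hsmul v),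
      intervalIntegral.integral_of_le hab]
  have hintegrable {v : ℝ → ℝ} (hv : IntervalIntegrable (fun t => w t * v t) volume a b) :
      Integrable v ν := by
    rw [integrable_withDensity_iff_integrable_smul' hdens hfin, integrable_congr (hsmul v)]
    exact (intervalIntegrable_iff_integrableOn_Ioc_of_le hab).1 hv
  have : IsProbabilityMeasure ν := by
    constructor
    rw [withDensity_apply _ MeasurableSet.univ, Measure.restrict_univ,
      ← ofReal_integral_eq_lintegral_ofReal, ← intervalIntegral.integral_of_le hab, hw1,
      ENNReal.ofReal_one]
    · exact (intervalIntegrable_iff_integrableOn_Ioc_of_le hab).1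
        (intervalIntegral.intervalIntegrable_of_integral_ne_zero (hw1 ▸ one_ne_zero))
    · filter_upwards [ae_restrict_mem measurableSet_Ioc] with t ht using hw0 t ht
  have hac : ν ≪ volume :=
    (withDensity_absolutelyContinuous _ _).trans Measure.restrict_le_self.absolutelyContinuous
  rw [← hintegral, ← hintegral]
  refine hf.map_integral_lt hfc hs ?_ (hintegrable hwu) (hintegrable hwfu) fun c => ?_
  · exact (withDensity_absolutelyContinuous _ _).ae_le
      ((ae_restrict_mem measurableSet_Ioc).mono fun t ht => hus t ht)
  · exact hac ((Set.subsingleton_singleton.preimage hu).measure_zero volume)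

lemma hasDerivAt_log_Gamma {x : ℝ} (hx : 0 < x) :
    HasDerivAt (fun t => log (Gamma t)) (psi x) x :=
  (differentiableAt_Gamma fun m => by linarith [(m.cast_nonneg : (0 : ℝ) ≤ m)]).hasDerivAt.log
    (Gamma_pos_of_pos hx).ne'

lemma log_Gamma_add_one {x : ℝ} (hx : 0 < x) :
    log (Gamma (x + 1)) = log (Gamma x) + log x := by
  rw [Gamma_add_one hx.ne', log_mul hx.ne' (Gamma_pos_of_pos hx).ne', add_comm]

lemma psi_add_one {x : ℝ} (hx : 0 < x) : psi (x + 1) = psi x + x⁻¹ := by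
  have hshift : HasDerivAt (fun t => log (Gamma (t + 1))) (psi (x + 1)) x :=
    (hasDerivAt_log_Gamma (by linarith)).comp_add_const x 1
  have hrec : HasDerivAt (fun t => log (Gamma t) + log t) (psi x + x⁻¹) x :=
    (hasDerivAt_log_Gamma hx).add (hasDerivAt_log hx.ne')
  refine hshift.unique (hrec.congr_of_eventuallyEq ?_)
  filter_upwards [eventually_gt_nhds hx] with t ht using log_Gamma_add_one ht

lemma psi_le_log {x : ℝ} (hx : 0 < x) : psi x ≤ log x := by
  have := convexOn_log_Gamma.le_slope_of_hasDerivAt hx (by simp; linarith) (lt_add_one x)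
    (hasDerivAt_log_Gamma hx)
  rw [slope_def_field, Function.comp_apply, Function.comp_apply, log_Gamma_add_one hx] at this
  simpa using this

lemma log_sub_one_le_psi {x : ℝ} (hx : 1 < x) : log (x - 1) ≤ psi x := by
  have hx1 : 0 < x - 1 := by linarith
  have := convexOn_log_Gamma.slope_le_of_hasDerivAt hx1 (by simp; linarith) (sub_one_lt x)
    (hasDerivAt_log_Gamma (by linarith))
  have hrec : log (Gamma x) = log (Gamma (x - 1)) + log (x - 1) := by
    simpa using log_Gamma_add_one hx1
  rw [slope_def_field, Function.comp_apply, Function.comp_apply, hrec] at this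
  simpa using this

lemma monotoneOn_psi : MonotoneOn psi (Ioi 0) := by
  intro a ha b hb hab
  rcases hab.eq_or_lt with rfl | hlt
  · rfl
  calc psi a ≤ slope (log ∘ Gamma) a b :=
        convexOn_log_Gamma.le_slope_of_hasDerivAt ha hb hlt (hasDerivAt_log_Gamma ha)
    _ ≤ psi b := convexOn_log_Gamma.slope_le_of_hasDerivAt ha hb hlt (hasDerivAt_log_Gamma hb)

lemma psi_add_nat {x : ℝ} (hx : 0 < x) (N : ℕ) :
    psi (x + N) = psi x + ∑ n ∈ Finset.range N, (x + n)⁻¹ := by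
  induction N with
  | zero => simp
  | succ N ih =>
    rw [Nat.cast_succ, ← add_assoc, psi_add_one (by positivity), ih, Finset.sum_range_succ,
      add_assoc]

lemma tendsto_psi_add_nat_sub_log {x : ℝ} (hx : 0 < x) :
    Tendsto (fun N : ℕ => psi (x + N) - log N) atTop (𝓝 0) := by
  have hlog (y : ℝ) : Tendsto (fun N : ℕ => log (N + y) - log N) atTop (𝓝 0) :=
    (tendsto_log_comp_add_sub_log y).comp tendsto_natCast_atTop_atTop
  refine tendsto_of_tendsto_of_tendsto_of_le_of_le' (hlog (x - 1)) (hlog x) ?_ ?_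
  · filter_upwards [eventually_ge_atTop 1] with N hN
    have : (1 : ℝ) ≤ N := by exact_mod_cast hN
    have := log_sub_one_le_psi (x := x + N) (by linarith)
    rw [show (N : ℝ) + (x - 1) = x + N - 1 by ring]
    linarith
  · filter_upwards with N
    have := psi_le_log (x := x + N) (by positivity)
    rw [add_comm (N : ℝ)]
    linarith

lemma tendsto_log_sub_sum_inv {x : ℝ} (hx : 0 < x) :
    Tendsto (fun N : ℕ => log N - ∑ n ∈ Finset.range N, (x + n)⁻¹) atTop (𝓝 (psi x)) := by
  have := (tendsto_psi_add_nat_sub_log hx).const_sub (psi x)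
  rw [sub_zero] at this
  refine this.congr fun N => ?_
  rw [psi_add_nat hx]
  ring

lemma strictConvexOn_neg_inv_inv_add {c : ℝ} (hc : 0 < c) :
    StrictConvexOn ℝ (Ioi 0) fun s : ℝ => -(s⁻¹ + c)⁻¹ := by
  have hslope {u v : ℝ} (hu : 0 < u) (hv : 0 < v) (huv : u < v) :
      (-(v⁻¹ + c)⁻¹ - -(u⁻¹ + c)⁻¹) / (v - u) = -((1 + c * u) * (1 + c * v))⁻¹ := by
    have : v - u ≠ 0 := sub_ne_zero.2 huv.ne'
    field_simp
    ring
  refine strictConvexOn_of_slope_strict_mono_adjacent (convex_Ioi 0) ?_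
  intro u v w hu hw huv hvw
  have hu : (0 : ℝ) < u := hu
  have hv : 0 < v := hu.trans huv
  rw [hslope hu hv huv, hslope hv hw hvw, neg_lt_neg_iff]
  gcongr

lemma convexOn_psi_inv_add {c : ℝ} (hc : 0 < c) :
    ConvexOn ℝ (Ioi 0) fun s : ℝ => psi (s⁻¹ + c) := by
  refine ConvexOn.of_tendsto (l := atTop) (f := fun (N : ℕ) s => log N +
    ∑ n ∈ Finset.range N, -(s⁻¹ + (c + n))⁻¹) (convex_Ioi 0) (fun N => ?_) (fun s hs => ?_)
  · exact (convexOn_const _ (convex_Ioi 0)).add <| ConvexOn.sum _ (convex_Ioi 0) fun n _ =>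
      (strictConvexOn_neg_inv_inv_add (by positivity)).convexOn
  · have hs : (0 : ℝ) < s := hs
    refine (tendsto_log_sub_sum_inv (x := s⁻¹ + c) (by positivity)).congr fun N => ?_
    simp only [Finset.sum_neg_distrib, add_assoc, sub_eq_add_neg]

lemma strictConvexOn_psi_inv : StrictConvexOn ℝ (Ioi 0) fun s : ℝ => psi s⁻¹ := by
  -- `ψ(s⁻¹) = ψ(s⁻¹ + 2) - s - (s⁻¹ + 1)⁻¹`, and the last term is strictly convex
  have h := ((convexOn_psi_inv_add two_pos).add (concaveOn_id (convex_Ioi 0)).neg)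
    |>.add_strictConvexOn (strictConvexOn_neg_inv_inv_add one_pos)
  refine h.congr fun s (hs : 0 < s) => ?_
  have h1 := psi_add_one (inv_pos.2 hs)
  have h2 := psi_add_one (x := s⁻¹ + 1) (by positivity)
  rw [inv_inv] at h1
  rw [add_assoc, one_add_one_eq_two] at h2
  simp only [Pi.add_apply, Pi.neg_apply, id]
  linarith

lemma continuousOn_log_Gamma : ContinuousOn (fun t => log (Gamma t)) (Ioi 0) :=
  fun _ ht => (hasDerivAt_log_Gamma ht).continuousAt.continuousWithinAt

lemma intervalIntegrable_log_Gamma {a b : ℝ} (ha : 0 < a) (hb : 0 < b) :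
    IntervalIntegrable (fun t => log (Gamma t)) volume a b :=
  (continuousOn_log_Gamma.mono fun _ ht => (lt_min ha hb).trans_le ht.1).intervalIntegrable

lemma intervalIntegrable_psi {a b : ℝ} (ha : 0 < a) (hb : 0 < b) :
    IntervalIntegrable psi volume a b :=
  (monotoneOn_psi.mono fun _ ht => (lt_min ha hb).trans_le ht.1).intervalIntegrable

lemma integral_log_Gamma_sub_integral_log_Gamma {x y : ℝ} (hx : 0 < x) (hy : 0 < y) :
    (∫ t in y..y + 1, log (Gamma t)) - ∫ t in x..x + 1, log (Gamma t) =
      (y * log y - y) - (x * log x - x) := by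
  have hint {a b : ℝ} (ha : 0 < a) (hb : 0 < b) := intervalIntegrable_log_Gamma ha hb
  have hshift : IntervalIntegrable (fun t => log (Gamma (t + 1))) volume x y := by
    simpa using (hint (a := x + 1) (b := y + 1) (by positivity) (by positivity)).comp_add_right 1
  rw [intervalIntegral.integral_interval_sub_interval_comm' (hint hy (by positivity))
    (hint hx (by positivity)) (hint hy hx), ← intervalIntegral.integral_comp_add_right,
    ← intervalIntegral.integral_sub hshift (hint hx hy)]
  have hlog : ∫ t in x..y, (log (Gamma (t + 1)) - log (Gamma t)) = ∫ t in x..y, log t :=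
    intervalIntegral.integral_congr fun t ht => by
      rw [log_Gamma_add_one ((lt_min hx hy).trans_le ht.1), add_sub_cancel_left]
  rw [hlog, integral_log]
  ring

lemma log_Gamma_sub_log_Gamma_mem_Icc {y t : ℝ} (hy : 1 < y) (ht : t ∈ Icc y (y + 1)) :
    log (Gamma t) - log (Gamma y) ∈ Icc ((t - y) * log (y - 1)) ((t - y) * log y) := by
  rcases ht.1.eq_or_lt with rfl | hyt
  · simp
  have hy0 : 0 < y := by linarith
  have hS {z : ℝ} (hz : y ≤ z) : z ∈ Ioi (0 : ℝ) := hy0.trans_le hz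
  have hlower : log (y - 1) ≤ slope (log ∘ Gamma) y t :=
    (log_sub_one_le_psi hy).trans (convexOn_log_Gamma.le_slope_of_hasDerivAt hy0
      (hS ht.1) hyt (hasDerivAt_log_Gamma hy0))
  have hupper : slope (log ∘ Gamma) y t ≤ log y := by
    have := convexOn_log_Gamma.slope_mono hy0 ⟨hS ht.1, hyt.ne'⟩
      ⟨hS (by linarith), by simp⟩ ht.2
    rwa [slope_def_field (log ∘ Gamma) y (y + 1), Function.comp_apply, Function.comp_apply,
      log_Gamma_add_one hy0, add_sub_cancel_left, add_sub_cancel_left, div_one] at this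
  rw [slope_def_field, Function.comp_apply, Function.comp_apply] at hlower hupper
  have hty : 0 < t - y := sub_pos.2 hyt
  exact ⟨by rwa [le_div_iff₀ hty, mul_comm] at hlower,
    by rwa [div_le_iff₀ hty, mul_comm] at hupper⟩

lemma integral_log_Gamma_mem_Icc {y : ℝ} (hy : 1 < y) :
    ∫ t in y..y + 1, log (Gamma t) ∈
      Icc (log (Gamma y) + log (y - 1) / 2) (log (Gamma y) + log y / 2) := by
  have hline (c : ℝ) :
      ∫ t in y..y + 1, (log (Gamma y) + (t - y) * c) = log (Gamma y) + c / 2 := by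
    rw [intervalIntegral.integral_add intervalIntegrable_const
      ((by fun_prop : Continuous fun t : ℝ => (t - y) * c).intervalIntegrable _ _),
      intervalIntegral.integral_mul_const,
      intervalIntegral.integral_comp_sub_right (fun t => t)]
    simp
    ring
  have hcont (c : ℝ) :
      IntervalIntegrable (fun t => log (Gamma y) + (t - y) * c) volume y (y + 1) :=
    (by fun_prop : Continuous fun t => log (Gamma y) + (t - y) * c).intervalIntegrable _ _
  have hint := intervalIntegrable_log_Gamma (a := y) (b := y + 1) (by linarith) (by linarith)
  have hle : y ≤ y + 1 := by linarith
  constructor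
  · rw [← hline]
    refine intervalIntegral.integral_mono_on hle (hcont _) hint fun t ht => ?_
    linarith [(log_Gamma_sub_log_Gamma_mem_Icc hy ht).1]
  · rw [← hline]
    refine intervalIntegral.integral_mono_on hle hint (hcont _) fun t ht => ?_
    linarith [(log_Gamma_sub_log_Gamma_mem_Icc hy ht).2]

lemma tendsto_log_factorial_sub :
    Tendsto (fun n : ℕ => log n ! - (n + 1 / 2) * log n + n) atTop (𝓝 (log (2 * π) / 2)) := by
  have h := ((continuousAt_log (by positivity)).tendsto.comp
    Stirling.tendsto_stirlingSeq_sqrt_pi).add_const (log 2 / 2)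
  rw [Function.comp_def, log_sqrt pi_pos.le, ← add_div, ← log_mul pi_pos.ne' two_ne_zero,
    mul_comm] at h
  refine h.congr' ?_
  filter_upwards [eventually_ge_atTop 1] with n hn
  have hn : (0 : ℝ) < n := by exact_mod_cast hn
  rw [Stirling.log_stirlingSeq_formula, log_mul two_ne_zero hn.ne',
    log_div hn.ne' (exp_pos 1).ne', log_exp]
  ring

theorem integral_log_Gamma {x : ℝ} (hx : 0 < x) :
    ∫ t in x..x + 1, log (Gamma t) = x * log x - x + log (2 * π) / 2 := by
  set C := (∫ t in x..x + 1, log (Gamma t)) - (x * log x - x)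
  have hC (n : ℕ) (hn : 2 ≤ n) :
      log n ! - (n + 1 / 2) * log n + n + (log (n - 1) - log n) / 2 ≤ C ∧
        C ≤ log n ! - (n + 1 / 2) * log n + n := by
    have hn : (1 : ℝ) < n := by exact_mod_cast hn
    have hfac : log (Gamma n) = log n ! - log n := by
      rw [← Gamma_nat_eq_factorial, log_Gamma_add_one (by linarith)]
      ring
    have := integral_log_Gamma_sub_integral_log_Gamma hx (by linarith : (0 : ℝ) < n)
    have := integral_log_Gamma_mem_Icc hn
    constructor <;> linarith [this.1, this.2]
  have hlog : Tendsto (fun n : ℕ => (log (n - 1) - log n) / 2) atTop (𝓝 0) := by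
    simpa [← sub_eq_add_neg] using
      ((tendsto_log_comp_add_sub_log (-1)).comp tendsto_natCast_atTop_atTop).div_const 2
  suffices C = log (2 * π) / 2 by linarith
  refine le_antisymm (ge_of_tendsto tendsto_log_factorial_sub ?_)
    (le_of_tendsto (by simpa only [add_zero] using tendsto_log_factorial_sub.add hlog) ?_)
  · filter_upwards [eventually_ge_atTop 2] with n hn using (hC n hn).2
  · filter_upwards [eventually_ge_atTop 2] with n hn using (hC n hn).1

lemma integral_mul_psi {x : ℝ} (hx : 0 < x) :
    ∫ t in x..x + 1, (x + 1 - t) * psi t =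
      (∫ t in x..x + 1, log (Gamma t)) - log (Gamma x) := by
  have hpos {t : ℝ} (ht : t ∈ uIcc x (x + 1)) : 0 < t :=
    (lt_min hx (by linarith)).trans_le ht.1
  rw [intervalIntegral.integral_mul_deriv_eq_deriv_mul (u := fun t => x + 1 - t)
    (u' := fun _ => -1) (fun t _ => by simpa using (hasDerivAt_id t).const_sub (x + 1))
    (fun t ht => hasDerivAt_log_Gamma (hpos ht)) intervalIntegrable_const
    (intervalIntegrable_psi hx (by linarith))]
  simp only [sub_self, zero_mul, add_sub_cancel_left, one_mul, neg_one_mul,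
    intervalIntegral.integral_neg]
  ring

lemma integral_two_mul_add_one_sub (x : ℝ) : ∫ t in x..x + 1, 2 * (x + 1 - t) = 1 := by
  rw [intervalIntegral.integral_const_mul,
    intervalIntegral.integral_comp_sub_left (fun t => t)]
  simp

lemma integral_add_one_sub_mul_inv {x : ℝ} (hx : 0 < x) :
    ∫ t in x..x + 1, (x + 1 - t) * t⁻¹ = (x + 1) * log (1 + 1 / x) - 1 := by
  have h0 : (0 : ℝ) ∉ uIcc x (x + 1) := fun h => by
    have := (uIcc_of_le (by linarith : x ≤ x + 1) ▸ h).1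
    linarith
  have hinv : IntervalIntegrable (fun t : ℝ => t⁻¹) volume x (x + 1) :=
    intervalIntegral.intervalIntegrable_inv (fun t ht => by rintro rfl; exact h0 ht)
      continuousOn_id
  have hcongr : EqOn (fun t => (x + 1 - t) * t⁻¹) (fun t => (x + 1) * t⁻¹ - 1)
      (uIcc x (x + 1)) := fun t ht => by
    have : t ≠ 0 := by rintro rfl; exact h0 ht
    field_simp
  rw [intervalIntegral.integral_congr hcongr, intervalIntegral.integral_sub
    (hinv.const_mul _) intervalIntegrable_const, intervalIntegral.integral_const_mul,
    integral_inv h0, show (x + 1) / x = 1 + 1 / x by field_simp]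
  simp only [intervalIntegral.integral_const, smul_eq_mul, add_sub_cancel_left, mul_one]

theorem psi_delta_lt {x : ℝ} (hx : 0 < x) :
    psi (δ x) < 2 * (x * log x - x + log (2 * π) / 2 - log (Gamma x)) := by
  have hIcc : Icc (x + 1)⁻¹ x⁻¹ ⊆ Ioi 0 := fun s hs => (inv_pos.2 (by linarith)).trans_le hs.1
  have hpos {t : ℝ} (ht : t ∈ uIcc x (x + 1)) : 0 < t :=
    (lt_min hx (by linarith)).trans_le ht.1
  have hw : Continuous fun t : ℝ => 2 * (x + 1 - t) := by fun_prop
  have hwu : IntervalIntegrable (fun t => 2 * (x + 1 - t) * t⁻¹) volume x (x + 1) :=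
    (hw.continuousOn.mul (continuousOn_id.inv₀ fun t ht => (hpos ht).ne')).intervalIntegrable
  have hwpsi : IntervalIntegrable (fun t => 2 * (x + 1 - t) * psi t⁻¹⁻¹) volume x (x + 1) := by
    simpa only [inv_inv] using
      (intervalIntegrable_psi hx (by linarith)).continuousOn_mul hw.continuousOn
  have hjensen := (strictConvexOn_psi_inv.subset hIcc (convex_Icc _ _)).map_intervalIntegral_lt
    (by linarith) (strictConvexOn_psi_inv.convexOn.continuousOn isOpen_Ioi |>.mono hIcc)
    isClosed_Icc hw.measurable (fun t ht => by linarith [ht.2])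
    (integral_two_mul_add_one_sub x) inv_injective
    (fun t ht => ⟨inv_anti₀ (hx.trans ht.1) ht.2, inv_anti₀ hx ht.1.le⟩) hwu hwpsi
  have hdelta : δ x = (2 * ((x + 1) * log (1 + 1 / x) - 1))⁻¹ := by
    rw [δ, mul_inv, one_div, one_div]
  simp only [inv_inv, mul_assoc, intervalIntegral.integral_const_mul] at hjensen
  rwa [integral_add_one_sub_mul_inv hx, ← hdelta, integral_mul_psi hx,
    integral_log_Gamma hx] at hjensen

theorem stmt_1 (x : ℝ) (hx : 0 < x) :
    Real.Gamma x / (x ^ x * Real.exp (-x) * Real.sqrt (2 * Real.pi)) <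
      Real.exp (-(1/2) * psi (δ x)) := by
  rw [div_lt_iff₀ (by positivity), ← exp_log (Gamma_pos_of_pos hx), rpow_def_of_pos hx,
    ← exp_log (sqrt_pos.2 (by positivity : 0 < 2 * π)), log_sqrt (by positivity), ← exp_add,
    ← exp_add, ← exp_add, exp_lt_exp]
  linarith [psi_delta_lt hx]
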